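/- arXiv:2404.00868 — 6 statements merged into one kernel-verified Lean document; each statement's English description precedes it below -/
import Mathlib

section
/- Let L ⊣ R be an adjunction between categories C and D, with R fully faithful and D Karoubian (idempotent complete). Write T = R L for the induced monad on C, with unit η and counit ε. Let M ∈ C and φ : T M ⟶ M satisfy φ ∘ η_M = 1_M. Then there exists an object M₀ ∈ D and an isomorphism ν : M ≅ R M₀ such that φ = ν⁻¹ ∘ R(ε_{M₀}) ∘ T(ν). -/
/-!
A unital action `φ` makes `η_M` a split mono. Since `R` is fully faithful, `η_{TM}` is invertible,
so naturality `φ ≫ η_M = η_{TM} ≫ T φ` (with `T φ` split epi) shows that `η_M` is also epi, hence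
an isomorphism with inverse `φ`. Take `M₀ = L M` and `ν = η_M`: the triangle identity
`R(ε_{LM}) ∘ T(η_M) = 1` reduces the claim to `φ = η_M⁻¹`.
-/

open CategoryTheory

namespace CategoryTheory.Adjunction

variable {C D : Type*} [Category C] [Category D] {L : C ⥤ D} {R : D ⥤ C}

lemma isIso_unit_app_of_comp_eq_id (adj : L ⊣ R) [R.Full] [R.Faithful] {M : C}
    {φ : R.obj (L.obj M) ⟶ M} (hφ : adj.unit.app M ≫ φ = 𝟙 M) : IsIso (adj.unit.app M) := by
  have : IsSplitMono (adj.unit.app M) := ⟨⟨φ, hφ⟩⟩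
  have : IsSplitEpi (R.map (L.map φ)) :=
    ⟨⟨R.map (L.map (adj.unit.app M)), by rw [← R.map_comp, ← L.map_comp, hφ]; simp⟩⟩
  have hnat : φ ≫ adj.unit.app M = adj.unit.app _ ≫ R.map (L.map φ) :=
    (adj.unit_naturality φ).symm
  have : Epi (φ ≫ adj.unit.app M) := by rw [hnat]; infer_instance
  have : Epi (adj.unit.app M) := epi_of_epi φ _
  exact isIso_of_epi_of_isSplitMono _

end CategoryTheory.Adjunction

theorem splitting_of_unital_action_general
    {C D : Type*} [Category C] [Category D]
    (L : C ⥤ D) (R : D ⥤ C) (adj : L ⊣ R)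
    [R.Full] [R.Faithful]
    (M : C) (φ : R.obj (L.obj M) ⟶ M) (hφ : adj.unit.app M ≫ φ = 𝟙 M) :
    ∃ (M₀ : D) (ν : M ≅ R.obj M₀),
      φ = R.map (L.map ν.hom) ≫ R.map (adj.counit.app M₀) ≫ ν.inv := by
  have := adj.isIso_unit_app_of_comp_eq_id hφ
  refine ⟨L.obj M, asIso (adj.unit.app M), ?_⟩
  rw [← Category.assoc, ← R.map_comp, asIso_hom, adj.left_triangle_components, R.map_id,
    Category.id_comp, asIso_inv]
  exact IsIso.eq_inv_of_hom_inv_id hφ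

/-- If `L ⊣ R` with `R` fully faithful and `D` Karoubian (idempotent complete), then any
`φ : T M ⟶ M` (with `T = R L`) satisfying `φ ∘ η_M = 1_M` is, up to an isomorphism
`ν : M ≅ R M₀`, the free algebra structure map `R(ε_{M₀})`:
`φ = ν⁻¹ ∘ R(ε_{M₀}) ∘ T(ν)`. -/
theorem splitting_of_unital_action
    {C D : Type*} [Category C] [Category D]
    (L : C ⥤ D) (R : D ⥤ C) (adj : L ⊣ R)
    [R.Full] [R.Faithful] [IsIdempotentComplete D]
    (M : C) (φ : R.obj (L.obj M) ⟶ M) (hφ : adj.unit.app M ≫ φ = 𝟙 M) :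
    ∃ (M₀ : D) (ν : M ≅ R.obj M₀),
      φ = R.map (L.map ν.hom) ≫ R.map (adj.counit.app M₀) ≫ ν.inv :=
  splitting_of_unital_action_general L R adj M φ hφ
end

section
/- Let L ⊣ R be an adjunction with R fully faithful and the target category of L Karoubian, and T = R L the induced monad with unit η and multiplication μ = R ε L. Then every 'unital algebra' for T is associative: if φ : T M ⟶ M satisfies φ ∘ η_M = 1_M, then φ ∘ T(φ) = φ ∘ μ_M, i.e. (M, φ) is a T-algebra. -/
/-!
When `R` is fully faithful the counit is invertible, so the multiplication `μ = R ε L` of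
`T = R L` is invertible, and the unit law `η_T ≫ μ = 𝟙` forces `μ⁻¹ = η_T`. Inserting
`μ ≫ η_T = 𝟙` and using naturality of `η`, `T φ ≫ φ = μ ≫ η_T ≫ T φ ≫ φ = μ ≫ φ ≫ η ≫ φ = μ ≫ φ`.
-/

open CategoryTheory

namespace CategoryTheory.Monad

variable {C : Type*} [Category C] (T : Monad C)

theorem μ_app_comp_η_app_obj (M : C) [IsIso (T.μ.app M)] :
    T.μ.app M ≫ T.η.app (T.obj M) = 𝟙 _ := by
  rw [← cancel_mono (T.μ.app M), Category.assoc, T.left_unit]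
  exact (Category.comp_id _).trans (Category.id_comp _).symm

theorem map_comp_eq_μ_app_comp_of_unital {M : C} [IsIso (T.μ.app M)]
    (φ : T.obj M ⟶ M) (hφ : T.η.app M ≫ φ = 𝟙 M) :
    T.map φ ≫ φ = T.μ.app M ≫ φ :=
  calc T.map φ ≫ φ = T.μ.app M ≫ T.η.app (T.obj M) ≫ T.map φ ≫ φ := by
        rw [← Category.assoc (T.μ.app M), μ_app_comp_η_app_obj, Category.id_comp]
    _ = T.μ.app M ≫ φ ≫ T.η.app M ≫ φ := by rw [← T.η.naturality_assoc]; rfl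
    _ = T.μ.app M ≫ φ := by rw [hφ, Category.comp_id]

end CategoryTheory.Monad

theorem unital_action_is_associative_general
    {C D : Type*} [Category C] [Category D]
    (L : C ⥤ D) (R : D ⥤ C) (adj : L ⊣ R)
    [R.Full] [R.Faithful]
    (M : C) (φ : R.obj (L.obj M) ⟶ M) (hφ : adj.unit.app M ≫ φ = 𝟙 M) :
    R.map (L.map φ) ≫ φ = R.map (adj.counit.app (L.obj M)) ≫ φ :=
  have : IsIso (adj.toMonad.μ.app M) := inferInstanceAs (IsIso (R.map (adj.counit.app _)))
  adj.toMonad.map_comp_eq_μ_app_comp_of_unital φ hφ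

/-- If `L ⊣ R` with `R` fully faithful and `D` idempotent complete, then every unital
`T`-action is associative (`T = R L`, `μ = R ε L`): if `φ ∘ η_M = 1_M` then
`φ ∘ T(φ) = φ ∘ μ_M`, i.e. `(M, φ)` is a `T`-algebra. -/
theorem unital_action_is_associative
    {C D : Type*} [Category C] [Category D]
    (L : C ⥤ D) (R : D ⥤ C) (adj : L ⊣ R)
    [R.Full] [R.Faithful] [IsIdempotentComplete D]
    (M : C) (φ : R.obj (L.obj M) ⟶ M) (hφ : adj.unit.app M ≫ φ = 𝟙 M) :
    R.map (L.map φ) ≫ φ = R.map (adj.counit.app (L.obj M)) ≫ φ :=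
  unital_action_is_associative_general L R adj M φ hφ
end

section
/- Let G be a group and H, K ≤ G subgroups with K ⊆ H, let R be a commutative ring, and let V be an R-linear representation of K. Then there is an isomorphism of R[K]-modules Res^H_K (Ind^H_K V) ≅ ⨁_{s ∈ K\H/K} Ind^K_{K ∩ sKs⁻¹} (s · V), where s·V denotes V with K ∩ sKs⁻¹ acting via conjugation by s. -/
open CategoryTheory CategoryTheory.Limits

universe u

variable (R : Type u) [CommRing R] {G : Type u} [Group G]

/-- The subgroup `K ∩ sKs⁻¹` (inside the ambient group `H`, with `K' = K` viewed as a
subgroup of `H`). -/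
def mackeySubgroup {H : Type u} [Group H] (K : Subgroup H) (s : H) : Subgroup H :=
  K ⊓ Subgroup.map (MulAut.conj s).toMonoidHom K

lemma mackeySubgroup_le_conj {H : Type u} [Group H] (K : Subgroup H) (s : H)
    (x : H) (hx : x ∈ mackeySubgroup K s) : s⁻¹ * x * s ∈ K := by
  obtain ⟨-, k, hk, rfl⟩ := hx
  simpa [mul_assoc] using hk

/-- The monoid homomorphism `K ∩ sKs⁻¹ →* K`, `x ↦ s⁻¹ x s` (conjugation by `s⁻¹`). -/
def mackeyConjHom {H : Type u} [Group H] (K : Subgroup H) (s : H) :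
    ↥(mackeySubgroup K s) →* ↥K where
  toFun x := ⟨s⁻¹ * (x : H) * s, mackeySubgroup_le_conj K s x x.2⟩
  map_one' := by ext; simp
  map_mul' x y := by ext; simp [mul_assoc]

/-- `s·V`: the representation of `K ∩ sKs⁻¹` on `V` where `k` acts as `s⁻¹ k s` does on
the `K`-representation `V`. -/
noncomputable def mackeyConjRep {H : Type u} [Group H] (K : Subgroup H) (s : H)
    (V : Action (ModuleCat.{u} R) ↥K) : Action (ModuleCat.{u} R) ↥(mackeySubgroup K s) :=
  (Action.res (ModuleCat R) (mackeyConjHom K s)).obj V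

section Helpers

variable {R : Type u} [CommRing R] {H : Type u} [Monoid H]

/-- The representation underlying an action on `R`-modules. -/
def actRep (X : Action (ModuleCat.{u} R) H) : Representation R H X.V where
  toFun g := (X.ρ g).hom
  map_one' := by rw [map_one]; rfl
  map_mul' a b := by rw [map_mul]; rfl

lemma actHom_comm_apply {X Y : Action (ModuleCat.{u} R) H} (f : X ⟶ Y) (g : H) (x : X.V) :
    f.hom.hom (actRep X g x) = actRep Y g (f.hom.hom x) :=
  by have h := congrArg (fun φ : X.V ⟶ Y.V => φ.hom x) (f.comm g); exact h

/-- The action attached to a representation. -/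
def actOf {V : Type u} [AddCommGroup V] [Module R V] (ρ : Representation R H V) :
    Action (ModuleCat.{u} R) H where
  V := ModuleCat.of R V
  ρ :=
    { toFun := fun g => ModuleCat.ofHom (ρ g)
      map_one' := by rw [map_one]; rfl
      map_mul' := fun a b => by rw [map_mul]; rfl }

end Helpers


section Coind

variable {R : Type u} [CommRing R] {H : Type u} [Group H] (K : Subgroup H)

/-- The carrier of the coinduced representation: functions `f : H → W` with
`f (k * h) = k • f h`. -/
noncomputable def coindCar (W : Action (ModuleCat.{u} R) ↥K) : Submodule R (H → W.V) where
  carrier := {f | ∀ (k : ↥K) (h : H), f (↑k * h) = actRep W k (f h)}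
  add_mem' := fun hf hg k h => by simp [hf k h, hg k h]
  zero_mem' := fun k h => by simp
  smul_mem' := fun r f hf k h => by simp [hf k h]

/-- The coinduced representation of `H` on `coindCar`. -/
noncomputable def coindRep (W : Action (ModuleCat.{u} R) ↥K) : Representation R H ↥(coindCar K W) where
  toFun h₀ :=
    { toFun := fun f => ⟨fun h => f.1 (h * h₀), fun k h => by
        simpa [mul_assoc] using f.2 k (h * h₀)⟩
      map_add' := fun f g => rfl
      map_smul' := fun r f => rfl }
  map_one' := by
    apply LinearMap.ext; intro f; apply Subtype.ext; funext h; simp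
  map_mul' h₁ h₂ := by
    apply LinearMap.ext; intro f; apply Subtype.ext; funext h
    simp [mul_assoc]

/-- The coinduced representation as an object of `Action (ModuleCat.{u} R) H`. -/
noncomputable def coindObj (W : Action (ModuleCat.{u} R) ↥K) : Action (ModuleCat.{u} R) H := actOf (coindRep K W)

lemma coindObj_ρ_apply (W : Action (ModuleCat.{u} R) ↥K) (h₀ : H) (f : ↥(coindCar K W)) (h : H) :
    (actRep (coindObj K W) h₀ f).1 h = f.1 (h * h₀) := rfl

/-- Functoriality (on morphisms) of coinduction. -/
noncomputable def coindMap {W W' : Action (ModuleCat.{u} R) ↥K} (g : W ⟶ W') :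
    coindObj K W ⟶ coindObj K W' where
  hom := ModuleCat.ofHom
    { toFun := fun f => ⟨fun h => g.hom.hom (f.1 h), fun k h => by
        show g.hom.hom (f.1 (↑k * h)) = actRep W' k (g.hom.hom (f.1 h))
        rw [f.2 k h]; exact actHom_comm_apply g k (f.1 h)⟩
      map_add' := fun f f' => Subtype.ext (funext fun h => map_add g.hom.hom (f.1 h) (f'.1 h))
      map_smul' := fun r f => Subtype.ext (funext fun h => map_smul g.hom.hom r (f.1 h)) }
  comm := fun h₀ => rfl

end Coind

section E1

variable {R : Type u} [CommRing R] {H : Type u} [Group H] (K : Subgroup H)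

/-- The adjunction `Res ⊣ Coind` at the level of hom-sets. -/
noncomputable def resCoindEquiv (X : Action (ModuleCat.{u} R) H) (W : Action (ModuleCat.{u} R) ↥K) :
    ((Action.res (ModuleCat R) K.subtype).obj X ⟶ W) ≃ (X ⟶ coindObj K W) where
  toFun α :=
    { hom := ModuleCat.ofHom <|
      { toFun := fun x => ⟨fun h => α.hom.hom (actRep X h x), fun k h => by
          have := actHom_comm_apply α k (actRep X h x)
          simp only [map_mul]
          exact this⟩
        map_add' := fun x y => Subtype.ext (funext fun h =>
          show α.hom.hom (actRep X h (x + y)) = α.hom.hom (actRep X h x) + α.hom.hom (actRep X h y) by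
            rw [map_add]; exact map_add α.hom.hom _ _)
        map_smul' := fun r x => Subtype.ext (funext fun h =>
          show α.hom.hom (actRep X h (r • x)) = r • α.hom.hom (actRep X h x) by
            rw [map_smul]; exact map_smul α.hom.hom _ _) }
      comm := fun (h₀ : H) => by
        apply ModuleCat.hom_ext; apply LinearMap.ext; intro x; apply Subtype.ext; funext h
        show α.hom.hom (actRep X h (actRep X h₀ x)) = α.hom.hom (actRep X (h * h₀) x)
        rw [map_mul]
        rfl }
  invFun β :=
    { hom := ModuleCat.ofHom <|
      { toFun := fun x => (β.hom.hom x).1 1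
        map_add' := fun x y => by
          show (β.hom.hom (x + y)).1 1 = (β.hom.hom x).1 1 + (β.hom.hom y).1 1
          rw [map_add]; rfl
        map_smul' := fun r x => by
          show (β.hom.hom (r • x)).1 1 = r • (β.hom.hom x).1 1
          rw [map_smul]; rfl }
      comm := fun (k : ↥K) => by
        apply ModuleCat.hom_ext; apply LinearMap.ext; intro x
        show (β.hom.hom (actRep X (K.subtype k) x)).1 1 = actRep W k ((β.hom.hom x).1 1)
        have h1 := actHom_comm_apply β (K.subtype k) x
        have h3 : (β.hom.hom (actRep X (K.subtype k) x)).1 1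
            = (actRep (coindObj K W) (K.subtype k) (β.hom.hom x)).1 1 :=
          congrArg (fun f : ↥(coindCar K W) => f.1 (1 : H)) h1
        refine h3.trans ?_
        show (β.hom.hom x).1 (1 * (K.subtype k)) = actRep W k ((β.hom.hom x).1 1)
        rw [one_mul]
        simpa using (β.hom.hom x).2 k 1 }
  left_inv α := by
    apply Action.hom_ext; apply ModuleCat.hom_ext; apply LinearMap.ext; intro x
    show α.hom.hom (actRep X 1 x) = α.hom.hom x
    rw [map_one]; rfl
  right_inv β := by
    apply Action.hom_ext; apply ModuleCat.hom_ext; apply LinearMap.ext; intro x; apply Subtype.ext; funext h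
    show (β.hom.hom (actRep X h x)).1 1 = (β.hom.hom x).1 h
    have h1 := actHom_comm_apply β h x
    have h3 : (β.hom.hom (actRep X h x)).1 1 = (actRep (coindObj K W) h (β.hom.hom x)).1 1 :=
      congrArg (fun f : ↥(coindCar K W) => f.1 (1 : H)) h1
    refine h3.trans ?_
    show (β.hom.hom x).1 (1 * h) = (β.hom.hom x).1 h
    rw [one_mul]

lemma resCoindEquiv_natural (X : Action (ModuleCat.{u} R) H) {W W' : Action (ModuleCat.{u} R) ↥K} (g : W ⟶ W')
    (α : (Action.res (ModuleCat R) K.subtype).obj X ⟶ W) :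
    resCoindEquiv K X W' (α ≫ g) = resCoindEquiv K X W α ≫ coindMap K g := rfl

end E1

section Doset

variable {H : Type u} [Group H] (K : Subgroup H)

/-- A choice of `a ∈ K` with `(mk h).out = a * h * b`. -/
noncomputable def dosetA (h : H) : H := (DoubleCoset.mk_out_eq_mul K K h).choose

/-- A choice of `b ∈ K` with `(mk h).out = a * h * b`. -/
noncomputable def dosetB (h : H) : H := (DoubleCoset.mk_out_eq_mul K K h).choose_spec.choose

lemma dosetA_mem (h : H) : dosetA K h ∈ K :=
  (DoubleCoset.mk_out_eq_mul K K h).choose_spec.choose_spec.1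

lemma dosetB_mem (h : H) : dosetB K h ∈ K :=
  (DoubleCoset.mk_out_eq_mul K K h).choose_spec.choose_spec.2.1

lemma doset_spec (h : H) : (DoubleCoset.mk K K h).out = dosetA K h * h * dosetB K h :=
  (DoubleCoset.mk_out_eq_mul K K h).choose_spec.choose_spec.2.2

lemma doset_eq (h : H) :
    h = (dosetA K h)⁻¹ * (DoubleCoset.mk K K h).out * (dosetB K h)⁻¹ := by
  rw [doset_spec]; group

lemma doset_mk_mul_left {k₀ : H} (hk₀ : k₀ ∈ K) (h : H) :
    DoubleCoset.mk K K (k₀ * h) = DoubleCoset.mk K K h :=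
  (DoubleCoset.eq K K _ _).mpr ⟨k₀⁻¹, inv_mem hk₀, 1, one_mem K, by group⟩

lemma doset_mk_mul_right {k₀ : H} (hk₀ : k₀ ∈ K) (h : H) :
    DoubleCoset.mk K K (h * k₀) = DoubleCoset.mk K K h :=
  (DoubleCoset.eq K K _ _).mpr ⟨1, one_mem K, k₀⁻¹, inv_mem hk₀, by group⟩

end Doset

section Phi

variable {R : Type u} [CommRing R] {H : Type u} [Group H] (K : Subgroup H)
variable (V W : Action (ModuleCat.{u} R) ↥K)

variable (β : ∀ q : DoubleCoset.Quotient (K : Set H) K,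
  (mackeyConjRep R K q.out V ⟶
    (Action.res (ModuleCat R) (Subgroup.inclusion (inf_le_left :
      mackeySubgroup K q.out ≤ K))).obj W))

/-- The underlying linear map of `β q`, as a map `V → W`. -/
noncomputable def mackeyB (q : DoubleCoset.Quotient (K : Set H) K) : V.V →ₗ[R] W.V := (β q).hom.hom

lemma mackeyB_comm (q : DoubleCoset.Quotient (K : Set H) K) (u : H)
    (hu : u ∈ mackeySubgroup K q.out) (v : V.V) :
    mackeyB K V W β q (actRep V ⟨q.out⁻¹ * u * q.out, mackeySubgroup_le_conj K q.out u hu⟩ v)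
      = actRep W ⟨u, hu.1⟩ (mackeyB K V W β q v) := by
  have h1 := actHom_comm_apply (β q) (⟨u, hu⟩ : ↥(mackeySubgroup K q.out)) v
  exact h1

/-- The inverse map in the Mackey bijection: the function `H → W` built out of a family
of maps on double cosets. -/
noncomputable def mackeyE (v : V.V) (h : H) : W.V :=
  actRep W ⟨(dosetA K h)⁻¹, inv_mem (dosetA_mem K h)⟩
    (mackeyB K V W β (DoubleCoset.mk K K h)
      (actRep V ⟨(dosetB K h)⁻¹, inv_mem (dosetB_mem K h)⟩ v))

/-- Independence of `mackeyE` from the choice of decomposition. -/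
lemma mackeyE_eq (v : V.V) (h t k : H) (ht : t ∈ K) (hk : k ∈ K)
    (heq : h = t * (DoubleCoset.mk K K h).out * k) :
    mackeyE K V W β v h = actRep W ⟨t, ht⟩ (mackeyB K V W β (DoubleCoset.mk K K h) (actRep V ⟨k, hk⟩ v)) := by
  set s := (DoubleCoset.mk K K h).out with hs
  have hd : h = (dosetA K h)⁻¹ * s * (dosetB K h)⁻¹ := doset_eq K h
  set t' := (dosetA K h)⁻¹ with ht'
  set k' := (dosetB K h)⁻¹ with hk'
  have ht'K : t' ∈ K := inv_mem (dosetA_mem K h)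
  have hk'K : k' ∈ K := inv_mem (dosetB_mem K h)
  have e : t' * s * k' = t * s * k := hd.symm.trans heq
  set u := t'⁻¹ * t with hu'
  have huK : u ∈ K := mul_mem (inv_mem ht'K) ht
  have hkk : k' = (t' * s)⁻¹ * (t * s * k) := by rw [← e]; group
  have h1 : s⁻¹ * u * s = k' * k⁻¹ := by rw [hkk, hu']; group
  have hu : u ∈ mackeySubgroup K s := by
    refine ⟨huK, Subgroup.mem_map.mpr ⟨k' * k⁻¹, mul_mem hk'K (inv_mem hk), ?_⟩⟩
    show s * (k' * k⁻¹) * s⁻¹ = u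
    rw [← h1]; group
  have h2 : (⟨k', hk'K⟩ : ↥K)
      = ⟨s⁻¹ * u * s, mackeySubgroup_le_conj K s u hu⟩ * ⟨k, hk⟩ := by
    apply Subtype.ext
    show k' = (s⁻¹ * u * s) * k
    rw [h1]; group
  have h4 : (⟨t', ht'K⟩ : ↥K) * ⟨u, hu.1⟩ = ⟨t, ht⟩ := by
    apply Subtype.ext
    show t' * u = t
    rw [hu']; group
  show actRep W ⟨t', ht'K⟩ (mackeyB K V W β (DoubleCoset.mk K K h) (actRep V ⟨k', hk'K⟩ v)) = _
  rw [h2, map_mul, Module.End.mul_apply,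
    mackeyB_comm K V W β (DoubleCoset.mk K K h) u hu (actRep V ⟨k, hk⟩ v),
    ← Module.End.mul_apply, ← map_mul, h4]

end Phi

section PhiEquiv

variable {R : Type u} [CommRing R] {H : Type u} [Group H] (K : Subgroup H)
variable (V W : Action (ModuleCat.{u} R) ↥K)

/-- The Mackey bijection on hom-sets:
`Hom_K(V, Res Coind W) ≃ ∏_s Hom_{K_s}(s·V, Res W)`. -/
noncomputable def mackeyHomEquiv :
    (V ⟶ (Action.res (ModuleCat R) K.subtype).obj (coindObj K W)) ≃
    (∀ q : DoubleCoset.Quotient (K : Set H) K,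
      mackeyConjRep R K q.out V ⟶
        (Action.res (ModuleCat R) (Subgroup.inclusion (inf_le_left :
          mackeySubgroup K q.out ≤ K))).obj W) where
  toFun γ q :=
    { hom := ModuleCat.ofHom <|
      { toFun := fun v => (γ.hom.hom v).1 q.out
        map_add' := fun v v' => by
          show (γ.hom.hom (v + v')).1 q.out = (γ.hom.hom v).1 q.out + (γ.hom.hom v').1 q.out
          rw [map_add]; rfl
        map_smul' := fun r v => by
          show (γ.hom.hom (r • v)).1 q.out = r • (γ.hom.hom v).1 q.out
          rw [map_smul]; rfl }
      comm := fun (t : ↥(mackeySubgroup K q.out)) => by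
        apply ModuleCat.hom_ext; apply LinearMap.ext; intro v
        show (γ.hom.hom (actRep V (mackeyConjHom K q.out t) v)).1 q.out
          = actRep W (Subgroup.inclusion inf_le_left t) ((γ.hom.hom v).1 q.out)
        have h1 := actHom_comm_apply γ (mackeyConjHom K q.out t) v
        have h3 : (γ.hom.hom (actRep V (mackeyConjHom K q.out t) v)).1 q.out
            = (actRep (coindObj K W) (K.subtype (mackeyConjHom K q.out t)) (γ.hom.hom v)).1 q.out :=
          congrArg (fun f : ↥(coindCar K W) => f.1 q.out) h1
        refine h3.trans ?_
        show (γ.hom.hom v).1 (q.out * (q.out⁻¹ * ↑t * q.out))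
          = actRep W (Subgroup.inclusion inf_le_left t) ((γ.hom.hom v).1 q.out)
        have h5 : q.out * (q.out⁻¹ * (↑t : H) * q.out) = (↑t : H) * q.out := by group
        rw [h5]
        exact (γ.hom.hom v).2 ⟨(↑t : H), t.2.1⟩ q.out }
  invFun β :=
    { hom := ModuleCat.ofHom <|
      { toFun := fun v => ⟨mackeyE K V W β v, fun k₀ h => by
          have hq : DoubleCoset.mk K K ((↑k₀ : H) * h) = DoubleCoset.mk K K h :=
            doset_mk_mul_left K k₀.2 h
          have hout : (DoubleCoset.mk K K ((↑k₀ : H) * h)).out = (DoubleCoset.mk K K h).out := by rw [hq]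
          have heq : (↑k₀ : H) * h = ((↑k₀ : H) * (dosetA K h)⁻¹)
              * (DoubleCoset.mk K K ((↑k₀ : H) * h)).out * (dosetB K h)⁻¹ := by
            rw [hout]
            conv_lhs => rw [doset_eq K h]
            group
          have hL := mackeyE_eq K V W β v ((↑k₀ : H) * h) _ _
            (mul_mem k₀.2 (inv_mem (dosetA_mem K h))) (inv_mem (dosetB_mem K h)) heq
          rw [hL, hq]
          have hmul : (⟨(↑k₀ : H) * (dosetA K h)⁻¹,
              mul_mem k₀.2 (inv_mem (dosetA_mem K h))⟩ : ↥K)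
              = k₀ * ⟨(dosetA K h)⁻¹, inv_mem (dosetA_mem K h)⟩ := Subtype.ext rfl
          rw [hmul, map_mul, Module.End.mul_apply]
          rfl⟩
        map_add' := fun v v' => Subtype.ext (funext fun h => by
          show mackeyE K V W β (v + v') h = mackeyE K V W β v h + mackeyE K V W β v' h
          simp [mackeyE, map_add])
        map_smul' := fun r v => Subtype.ext (funext fun h => by
          show mackeyE K V W β (r • v) h = r • mackeyE K V W β v h
          simp [mackeyE, map_smul]) }
      comm := fun (k₀ : ↥K) => by
        apply ModuleCat.hom_ext; apply LinearMap.ext; intro v; apply Subtype.ext; funext h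
        show mackeyE K V W β (actRep V k₀ v) h = mackeyE K V W β v (h * (↑k₀ : H))
        have hq : DoubleCoset.mk K K (h * (↑k₀ : H)) = DoubleCoset.mk K K h :=
          doset_mk_mul_right K k₀.2 h
        have hout : (DoubleCoset.mk K K (h * (↑k₀ : H))).out = (DoubleCoset.mk K K h).out := by rw [hq]
        have heq : h * (↑k₀ : H) = (dosetA K h)⁻¹
            * (DoubleCoset.mk K K (h * (↑k₀ : H))).out * ((dosetB K h)⁻¹ * (↑k₀ : H)) := by
          rw [hout]
          conv_lhs => rw [doset_eq K h]
          group
        have hL := mackeyE_eq K V W β v (h * (↑k₀ : H)) _ _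
          (inv_mem (dosetA_mem K h)) (mul_mem (inv_mem (dosetB_mem K h)) k₀.2) heq
        rw [hL, hq]
        have hmul : (⟨(dosetB K h)⁻¹ * (↑k₀ : H),
            mul_mem (inv_mem (dosetB_mem K h)) k₀.2⟩ : ↥K)
            = ⟨(dosetB K h)⁻¹, inv_mem (dosetB_mem K h)⟩ * k₀ := Subtype.ext rfl
        rw [hmul, map_mul, Module.End.mul_apply]
        rfl }
  left_inv γ := by
    apply Action.hom_ext; apply ModuleCat.hom_ext; apply LinearMap.ext; intro v; apply Subtype.ext; funext h
    show actRep W ⟨(dosetA K h)⁻¹, inv_mem (dosetA_mem K h)⟩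
        ((γ.hom.hom (actRep V ⟨(dosetB K h)⁻¹, inv_mem (dosetB_mem K h)⟩ v)).1 (DoubleCoset.mk K K h).out)
      = (γ.hom.hom v).1 h
    have h1 := actHom_comm_apply γ
      (⟨(dosetB K h)⁻¹, inv_mem (dosetB_mem K h)⟩ : ↥K) v
    have h3 : (γ.hom.hom (actRep V ⟨(dosetB K h)⁻¹, inv_mem (dosetB_mem K h)⟩ v)).1
          (DoubleCoset.mk K K h).out
        = (γ.hom.hom v).1 ((DoubleCoset.mk K K h).out * (dosetB K h)⁻¹) :=
      congrArg (fun f : ↥(coindCar K W) => f.1 (DoubleCoset.mk K K h).out) h1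
    rw [h3]
    have h4 := (γ.hom.hom v).2 ⟨(dosetA K h)⁻¹, inv_mem (dosetA_mem K h)⟩
      ((DoubleCoset.mk K K h).out * (dosetB K h)⁻¹)
    rw [← h4]
    exact congrArg (γ.hom.hom v).1 (by rw [← mul_assoc, ← doset_eq K h])
  right_inv β := by
    funext q
    apply Action.hom_ext; apply ModuleCat.hom_ext; apply LinearMap.ext; intro v
    show mackeyE K V W β v q.out = (β q).hom.hom v
    have hmk : DoubleCoset.mk K K q.out = q := DoubleCoset.out_eq' K K q
    have hout : (DoubleCoset.mk K K q.out).out = q.out := by rw [hmk]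
    have heq : q.out = 1 * (DoubleCoset.mk K K q.out).out * 1 := by rw [hout]; group
    have hL := mackeyE_eq K V W β v q.out 1 1 (one_mem K) (one_mem K) heq
    rw [hL, hmk]
    have h1 : (⟨(1 : H), one_mem K⟩ : ↥K) = 1 := rfl
    rw [h1, map_one, map_one]
    rfl

lemma mackeyHomEquiv_natural {W' : Action (ModuleCat.{u} R) ↥K} (g : W ⟶ W')
    (γ : V ⟶ (Action.res (ModuleCat R) K.subtype).obj (coindObj K W)) :
    mackeyHomEquiv K V W'
        (γ ≫ (Action.res (ModuleCat R) K.subtype).map (coindMap K g))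
      = fun q => mackeyHomEquiv K V W γ q ≫
          (Action.res (ModuleCat R) (Subgroup.inclusion (inf_le_left :
            mackeySubgroup K q.out ≤ K))).map g := rfl

end PhiEquiv

section SigmaEquiv

variable {C : Type*} [Category C]

/-- Universal property of coproducts as an equivalence of hom-sets. -/
noncomputable def sigmaHomEquiv {β : Type*} (f : β → C) [HasCoproduct f] (W : C) :
    ((∐ f) ⟶ W) ≃ ∀ b, f b ⟶ W where
  toFun α b := Sigma.ι f b ≫ α
  invFun p := Sigma.desc p
  left_inv α := Sigma.hom_ext _ _ (fun b => by simp)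
  right_inv p := by funext b; simp

lemma sigmaHomEquiv_symm_natural {β : Type*} (f : β → C) [HasCoproduct f]
    {W W' : C} (g : W ⟶ W') (p : ∀ b, f b ⟶ W) :
    (sigmaHomEquiv f W').symm (fun b => p b ≫ g) = (sigmaHomEquiv f W).symm p ≫ g :=
  Sigma.hom_ext _ _ (fun b => by simp [sigmaHomEquiv])

end SigmaEquiv

section Main

variable {R : Type u} [CommRing R] {H : Type u} [Group H] (K : Subgroup H)
variable (V : Action (ModuleCat.{u} R) ↥K)
variable (ind : Action (ModuleCat.{u} R) ↥K ⥤ Action (ModuleCat.{u} R) H)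
variable (adjInd : ind ⊣ Action.res (ModuleCat R) K.subtype)
variable (indIn : ∀ s : H, Action (ModuleCat.{u} R) ↥(mackeySubgroup K s) ⥤ Action (ModuleCat.{u} R) ↥K)
variable (adjIndIn : ∀ s : H, indIn s ⊣ Action.res (ModuleCat R)
  (Subgroup.inclusion (inf_le_left : mackeySubgroup K s ≤ K)))

/-- First half of the total hom-set equivalence. -/
noncomputable def mackeyPart1 (W : Action (ModuleCat.{u} R) ↥K) :
    ((Action.res (ModuleCat R) K.subtype).obj (ind.obj V) ⟶ W) ≃
    (∀ q : DoubleCoset.Quotient (K : Set H) K,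
      (indIn q.out).obj (mackeyConjRep R K q.out V) ⟶ W) :=
  (resCoindEquiv K (ind.obj V) W).trans <|
    (adjInd.homEquiv V (coindObj K W)).trans <|
      (mackeyHomEquiv K V W).trans <|
        (Equiv.piCongrRight fun q =>
          ((adjIndIn q.out).homEquiv (mackeyConjRep R K q.out V) W).symm)

lemma mackeyPart1_natural {W W' : Action (ModuleCat.{u} R) ↥K} (g : W ⟶ W')
    (α : (Action.res (ModuleCat R) K.subtype).obj (ind.obj V) ⟶ W) :
    mackeyPart1 K V ind adjInd indIn adjIndIn W' (α ≫ g)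
      = fun q => mackeyPart1 K V ind adjInd indIn adjIndIn W α q ≫ g := by
  funext q
  unfold mackeyPart1
  simp only [Equiv.trans_apply]
  have h1 := resCoindEquiv_natural K (ind.obj V) g α
  rw [h1]
  have h2 := Adjunction.homEquiv_naturality_right adjInd
    (resCoindEquiv K (ind.obj V) W α) (coindMap K g)
  rw [h2]
  have h3 := mackeyHomEquiv_natural K V W g
    ((adjInd.homEquiv V (coindObj K W)) (resCoindEquiv K (ind.obj V) W α))
  rw [h3]
  exact (adjIndIn q.out).homEquiv_naturality_right_symm _ g

variable [HasCoproduct fun q : DoubleCoset.Quotient (K : Set H) K =>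
  (indIn q.out).obj (mackeyConjRep R K q.out V)]

/-- Second half of the total hom-set equivalence. -/
noncomputable def mackeyPart2 (W : Action (ModuleCat.{u} R) ↥K) :
    ((∐ fun q : DoubleCoset.Quotient (K : Set H) K =>
        (indIn q.out).obj (mackeyConjRep R K q.out V)) ⟶ W) ≃
    (∀ q : DoubleCoset.Quotient (K : Set H) K,
      (indIn q.out).obj (mackeyConjRep R K q.out V) ⟶ W) :=
  sigmaHomEquiv (fun q : DoubleCoset.Quotient (K : Set H) K =>
    (indIn q.out).obj (mackeyConjRep R K q.out V)) W

/-- The total hom-set equivalence `Hom_K(Res Ind V, W) ≃ Hom_K(∐_q Ind_q (q·V), W)`. -/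
noncomputable def mackeyTotalEquiv (W : Action (ModuleCat.{u} R) ↥K) :
    ((Action.res (ModuleCat R) K.subtype).obj (ind.obj V) ⟶ W) ≃
    ((∐ fun q : DoubleCoset.Quotient (K : Set H) K =>
        (indIn q.out).obj (mackeyConjRep R K q.out V)) ⟶ W) :=
  (mackeyPart1 K V ind adjInd indIn adjIndIn W).trans (mackeyPart2 K V indIn W).symm

lemma mackeyTotalEquiv_natural {W W' : Action (ModuleCat.{u} R) ↥K} (g : W ⟶ W')
    (α : (Action.res (ModuleCat R) K.subtype).obj (ind.obj V) ⟶ W) :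
    mackeyTotalEquiv K V ind adjInd indIn adjIndIn W' (α ≫ g)
      = mackeyTotalEquiv K V ind adjInd indIn adjIndIn W α ≫ g := by
  unfold mackeyTotalEquiv
  simp only [Equiv.trans_apply]
  rw [mackeyPart1_natural K V ind adjInd indIn adjIndIn g α]
  exact sigmaHomEquiv_symm_natural _ g _

end Main

/-- Mackey's formula, for an ambient group `H` and a subgroup `K`. -/
theorem mackey_formula_aux {R : Type u} [CommRing R] {H : Type u} [Group H] (K : Subgroup H)
    (V : Action (ModuleCat.{u} R) ↥K)
    (ind : Action (ModuleCat.{u} R) ↥K ⥤ Action (ModuleCat.{u} R) H)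
    (adjInd : ind ⊣ Action.res (ModuleCat R) K.subtype)
    (indIn : ∀ s : H, Action (ModuleCat.{u} R) ↥(mackeySubgroup K s) ⥤ Action (ModuleCat.{u} R) ↥K)
    (adjIndIn : ∀ s : H, indIn s ⊣ Action.res (ModuleCat R)
      (Subgroup.inclusion (inf_le_left : mackeySubgroup K s ≤ K))) :
    Nonempty
      ((Action.res (ModuleCat R) K.subtype).obj (ind.obj V)
        ≅ ∐ fun q : DoubleCoset.Quotient (K : Set H) K =>
            (indIn q.out).obj (mackeyConjRep R K q.out V)) := by
  set X := (Action.res (ModuleCat R) K.subtype).obj (ind.obj V) with hX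
  set Y := ∐ fun q : DoubleCoset.Quotient (K : Set H) K =>
    (indIn q.out).obj (mackeyConjRep R K q.out V) with hY
  refine ⟨⟨(mackeyTotalEquiv K V ind adjInd indIn adjIndIn Y).symm (𝟙 Y),
    mackeyTotalEquiv K V ind adjInd indIn adjIndIn X (𝟙 X), ?_, ?_⟩⟩
  · apply (mackeyTotalEquiv K V ind adjInd indIn adjIndIn X).injective
    rw [mackeyTotalEquiv_natural K V ind adjInd indIn adjIndIn
      (mackeyTotalEquiv K V ind adjInd indIn adjIndIn X (𝟙 X))
      ((mackeyTotalEquiv K V ind adjInd indIn adjIndIn Y).symm (𝟙 Y)),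
      Equiv.apply_symm_apply, Category.id_comp]
  · have h := mackeyTotalEquiv_natural K V ind adjInd indIn adjIndIn
      ((mackeyTotalEquiv K V ind adjInd indIn adjIndIn Y).symm (𝟙 Y)) (𝟙 X)
    rw [Category.id_comp] at h
    rw [← h, Equiv.apply_symm_apply]

/-- **Mackey's formula.** Let `K ⊆ H ⊆ G` be subgroups, `R` a commutative ring, and `V`
a representation of `K` over `R` (we identify `K` with the subgroup `K' = K.subgroupOf H`
of `H`). For any induction functor `ind : Action (ModuleCat.{u} R) K ⥤ Action (ModuleCat.{u} R) H` left adjoint to restriction,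
and any inductions `ind_s : Action (ModuleCat.{u} R) (K ∩ sKs⁻¹) ⥤ Action (ModuleCat.{u} R) K` left adjoint to the respective
restrictions, there is an isomorphism of `R`-linear `K`-representations
`Res^H_K (Ind^H_K V) ≅ ⨁_{s ∈ K\H/K} Ind^K_{K ∩ sKs⁻¹} (s·V)`,
the sum being over a set of representatives of the double cosets `K\H/K`. -/
theorem mackey_formula
    (H K : Subgroup G) (hKH : K ≤ H)
    (V : Action (ModuleCat.{u} R) ↥(K.subgroupOf H))
    (ind : Action (ModuleCat.{u} R) ↥(K.subgroupOf H) ⥤ Action (ModuleCat.{u} R) ↥H)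
    (adjInd : ind ⊣ Action.res (ModuleCat R) (K.subgroupOf H).subtype)
    (indIn : ∀ s : ↥H, Action (ModuleCat.{u} R) ↥(mackeySubgroup (K.subgroupOf H) s) ⥤ Action (ModuleCat.{u} R) ↥(K.subgroupOf H))
    (adjIndIn : ∀ s : ↥H, indIn s ⊣ Action.res (ModuleCat R)
      (Subgroup.inclusion (inf_le_left :
        mackeySubgroup (K.subgroupOf H) s ≤ K.subgroupOf H)))
    :
    Nonempty
      ((Action.res (ModuleCat R) (K.subgroupOf H).subtype).obj (ind.obj V)
        ≅ ∐ (fun q : DoubleCoset.Quotient (K.subgroupOf H : Set ↥H) (K.subgroupOf H) =>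
            (indIn q.out).obj (mackeyConjRep R (K.subgroupOf H) q.out V))) := by
  exact mackey_formula_aux (K.subgroupOf H) V ind adjInd indIn adjIndIn
end

section
/- Let A be a category of presheaves of sets on a small category 𝒜, and let M(A) := Fun(∫A, Set) for A a presheaf, where ∫A is the category of elements. For a morphism a : A₁ → A₀ of presheaves, a^* : M(A₀) → M(A₁) is precomposition with the induced functor ∫A₁ → ∫A₀, and a_* is its left adjoint (left Kan extension). Then for any Cartesian square of presheaves A₂ = A₁ ×_{A₀} A₁ with projections a₁, a₂ : A₂ → A₁, the base change natural transformation χ : (a₂)_* ∘ a₁^* ⟹ a^* ∘ a_* is a natural isomorphism (Beck–Chevalley condition). -/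
/-!
The square of categories of elements induced by the pullback square is Guitart exact: a morphism
`φ : a(x₂) ⟶ a(x₃)` in `∫A₀` factors through the square in a universal way, via the element
`(A₁(φ) x₂, x₃)` of the pullback, which is a terminal object of the category of such
factorisations. Since `Set` is cocomplete, `a_* M` is a pointwise left Kan extension of `M`, and
restricting a pointwise left Kan extension along a Guitart exact square gives a pointwise left Kan
extension again. So `a^* a_* M` is a left Kan extension of `a₁^* M` along `a₂`, which is exactly
the statement that `χ_M` is an isomorphism.
-/

open CategoryTheory CategoryTheory.Limits

universe u

/-- Pullback functor `M(B) ⥤ M(A)` (precomposition with the induced functor on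
categories of elements) for a morphism `α : A ⟶ B` of presheaves of sets,
where `M(A) := Fun(∫A, Set)`. -/
def elementsPullback {𝒜 : Type u} [SmallCategory 𝒜] {A B : 𝒜ᵒᵖ ⥤ Type u} (α : A ⟶ B) :
    (B.Elements ⥤ Type u) ⥤ (A.Elements ⥤ Type u) :=
  (Functor.whiskeringLeft _ _ _).obj (CategoryOfElements.map α)

namespace CategoryTheory

section

variable {C D H : Type*} [Category C] [Category D] [Category H]
  {L : C ⥤ D} {K : (C ⥤ H) ⥤ (D ⥤ H)} (adj : K ⊣ (Functor.whiskeringLeft C D H).obj L)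

lemma Adjunction.isLeftKanExtension_unit_app (F : C ⥤ H) :
    (K.obj F).IsLeftKanExtension (adj.unit.app F) :=
  ⟨⟨mkInitialOfLeftAdjoint _ adj F⟩⟩

lemma Adjunction.isIso_map_comp_counit_app_iff {F : C ⥤ H} {G : D ⥤ H} (α : F ⟶ L ⋙ G) :
    IsIso (K.map α ≫ adj.counit.app G) ↔ G.IsLeftKanExtension α := by
  have := adj.isLeftKanExtension_unit_app F
  exact (Functor.isLeftKanExtension_iff_isIso _ (adj.unit.app F) α
    ((adj.homEquiv_unit _ _ _).symm.trans ((adj.homEquiv F G).apply_symm_apply α))).symm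

end

namespace CategoryOfElements

lemma eqToHom_val {J : Type*} [Category J] {F : J ⥤ Type*} {x y : F.Elements} (h : x = y) :
    (eqToHom h).val = eqToHom (congrArg Sigma.fst h) := by
  subst h
  rfl

variable {𝒜 : Type u} [SmallCategory 𝒜] {A B C : 𝒜ᵒᵖ ⥤ Type u} (f : A ⟶ C) (g : B ⟶ C)

lemma isPullback_pullback_app (X : 𝒜ᵒᵖ) :
    IsPullback ((pullback.fst f g).app X) ((pullback.snd f g).app X) (f.app X) (g.app X) :=
  (IsPullback.of_hasPullback f g).map ((evaluation _ _).obj X)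

lemma pullback_map_apply_eq_of_fst_of_snd {X Y : 𝒜ᵒᵖ} (h : X ⟶ Y) (q : (pullback f g).obj X)
    (p : (pullback f g).obj Y)
    (h₁ : A.map h ((pullback.fst f g).app X q) = (pullback.fst f g).app Y p)
    (h₂ : B.map h ((pullback.snd f g).app X q) = (pullback.snd f g).app Y p) :
    (pullback f g).map h q = p :=
  Types.ext_of_isPullback (isPullback_pullback_app f g Y)
    ((NatTrans.naturality_apply (pullback.fst f g) h q).trans h₁)
    ((NatTrans.naturality_apply (pullback.snd f g) h q).trans h₂)

noncomputable def pullbackTwoSquare :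
    TwoSquare (map (pullback.fst f g)) (map (pullback.snd f g)) (map f) (map g) :=
  eqToHom (congrArg map (pullback.condition (f := f) (g := g)))

lemma pullbackTwoSquare_app_val (X : (pullback f g).Elements) :
    ((pullbackTwoSquare f g).app X).val = 𝟙 X.1 := by
  simp only [pullbackTwoSquare]
  erw [eqToHom_app, eqToHom_val]
  rfl

variable {f g}

lemma structuredArrowRightwards_comm {X₂ : A.Elements} {X₃ : B.Elements}
    {φ : (map f).obj X₂ ⟶ (map g).obj X₃}
    (Y : (pullbackTwoSquare f g).StructuredArrowRightwards φ) :
    Y.hom.left.val ≫ Y.right.hom.val = φ.val := by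
  have h : (map f).map Y.hom.left ≫ (pullbackTwoSquare f g).app Y.right.left ≫
      (map g).map Y.right.hom = φ := CostructuredArrow.w Y.hom
  have h' := congrArg Subtype.val h
  erw [comp_val, comp_val, pullbackTwoSquare_app_val, Category.id_comp] at h'
  exact h'

variable (f g)

instance guitartExact_pullbackTwoSquare : (pullbackTwoSquare f g).GuitartExact := by
  rw [TwoSquare.guitartExact_iff_isConnected_rightwards]
  intro X₂ X₃ φ
  obtain ⟨p, hp₁, hp₂⟩ := Types.exists_of_isPullback (isPullback_pullback_app f g X₃.1)
    (A.map φ.val X₂.2) X₃.2 ((NatTrans.naturality_apply f φ.val X₂.2).trans φ.2)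
  let top := TwoSquare.StructuredArrowRightwards.mk (pullbackTwoSquare f g) φ
    ((pullback f g).elementsMk X₃.1 p) (homMk _ _ φ.val hp₁.symm)
    (homMk _ _ (𝟙 X₃.1) ((B.map_id_apply _ _).trans hp₂)) (by
      ext
      simp only [comp_val, map_map_coe, pullbackTwoSquare_app_val]
      change φ.val ≫ 𝟙 _ ≫ 𝟙 _ = _
      simp)
  refine isConnected_of_isTerminal _ (x := top) (IsTerminal.ofUniqueHom
    (fun Y => StructuredArrow.homMk (CostructuredArrow.homMk
      (homMk _ _ Y.right.hom.val ?_) ?_) ?_) ?_)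
  · refine pullback_map_apply_eq_of_fst_of_snd f g _ _ p ?_ (Y.right.hom.2.trans hp₂.symm)
    have hY : A.map Y.hom.left.val X₂.2 = (pullback.fst f g).app _ Y.right.left.2 :=
      Y.hom.left.2
    rw [hp₁, ← hY]
    exact (A.map_comp_apply _ _ _).symm.trans
      (congrArg (fun h => A.map h X₂.2) (structuredArrowRightwards_comm Y))
  · ext
    exact Category.comp_id Y.right.hom.val
  · ext
    exact structuredArrowRightwards_comm Y
  · intro Y m
    ext
    exact (Category.comp_id _).symm.trans (congrArg Subtype.val (CostructuredArrow.w m.right))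

end CategoryOfElements

end CategoryTheory

open CategoryTheory.CategoryOfElements in
/-- **Beck–Chevalley for presheaves of sets.** Let `𝒜` be a small category, `a : A₁ ⟶ A₀`
a morphism of presheaves of sets on `𝒜`, `A₂ = A₁ ×_{A₀} A₁` with projections `a₁, a₂`, and
`M(A) = Fun(∫A, Set)` with pullbacks `a^*` given by precomposition. For any left adjoints
`a_* ⊣ a^*` and `(a₂)_* ⊣ a₂^*`, the base change transformation
`χ : (a₂)_* ∘ a₁^* ⟹ a^* ∘ a_*` is a natural isomorphism (all its components are
isomorphisms). -/
theorem beck_chevalley_for_presheaves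
    {𝒜 : Type u} [SmallCategory 𝒜] {A₀ A₁ : 𝒜ᵒᵖ ⥤ Type u} (a : A₁ ⟶ A₀)
    (alow : (A₁.Elements ⥤ Type u) ⥤ (A₀.Elements ⥤ Type u))
    (adj : alow ⊣ elementsPullback a)
    (a2low : ((pullback a a).Elements ⥤ Type u) ⥤ (A₁.Elements ⥤ Type u))
    (adj2 : a2low ⊣ elementsPullback (pullback.snd a a))
    (M : A₁.Elements ⥤ Type u) :
    IsIso
      (a2low.map ((elementsPullback (pullback.fst a a)).map (adj.unit.app M)) ≫
       a2low.map (eqToHom (Functor.congr_obj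
         (show elementsPullback a ⋙ elementsPullback (pullback.fst a a)
             = elementsPullback a ⋙ elementsPullback (pullback.snd a a) from
           congrArg (Functor.whiskeringLeft _ _ _).obj
             (congrArg CategoryOfElements.map pullback.condition))
         (alow.obj M))) ≫
       adj2.counit.app ((elementsPullback a).obj (alow.obj M))) := by
  have e : elementsPullback a ⋙ elementsPullback (pullback.fst a a)
      = elementsPullback a ⋙ elementsPullback (pullback.snd a a) :=
    congrArg (Functor.whiskeringLeft _ _ _).obj (congrArg CategoryOfElements.map pullback.condition)
  have := adj.isLeftKanExtension_unit_app M
  have hKan := (Functor.isPointwiseLeftKanExtensionOfIsLeftKanExtension _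
    (adj.unit.app M)).compTwoSquare (pullbackTwoSquare a a)
  have hα : (elementsPullback (pullback.fst a a)).map (adj.unit.app M) ≫
      eqToHom (Functor.congr_obj e (alow.obj M)) =
      ((Functor.LeftExtension.mk _ (adj.unit.app M)).compTwoSquare (pullbackTwoSquare a a)).hom := by
    ext X : 2
    simp [pullbackTwoSquare, elementsPullback]
    erw [eqToHom_app, eqToHom_app, eqToHom_map]
    rfl
  rw [← Functor.map_comp_assoc]
  exact (adj2.isIso_map_comp_counit_app_iff _).2 (hα ▸ hKan.isLeftKanExtension)
end

section
/- Let T be a monad on a category C with unit η and multiplication μ. Suppose given functors a₁^*, a₂^* : C → C₂ and Δ^* : C₂ → C with Δ^* a₁^* = Δ^* a₂^* = Id, the map ξ(φ) = a₂^*(φ) ∘ a₁^*(η_M) for φ : T M ⟶ N, functors b₁^*, b₃^* : C → C₃ and maps α₁₂, α₁₃, α₂₃ from Hom(a₁^* M, a₂^* N) to hom-sets in C₃, and an injective map ρ : Hom_C(T T M, N) → Hom_{C₃}(b₁^* M, b₃^* N) satisfying: (i) ρ(ψ ∘ T φ') = α₂₃(ξ(ψ')) ∘ α₁₂(ξ(φ''))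 whenever ψ = φ₂₃ ∘ T φ₁₂ (the 'cocycle composition' identity of Lemma l2), and (ii) ρ(φ ∘ μ_M) = α₁₃(ξ(φ)). Then for φ : T M ⟶ M, the associativity condition φ ∘ T φ = φ ∘ μ_M holds if and only if α₁₃(ξ(φ)) = α₂₃(ξ(φ)) ∘ α₁₂(ξ(φ)) (the cocycle/pre-descent condition). -/
open CategoryTheory

theorem associativity_iff_predescent_general
    {C C₂ C₃ : Type*} [Category C] [Category C₂] [Category C₃]
    (T : Monad C)
    (a1star a2star : C ⥤ C₂)
    (b1star b2star b3star : C ⥤ C₃)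
    (ξ : ∀ {M N : C}, ((T : C ⥤ C).obj M ⟶ N) → (a1star.obj M ⟶ a2star.obj N))
    (α₁₂ : ∀ {M N : C}, (a1star.obj M ⟶ a2star.obj N) → (b1star.obj M ⟶ b2star.obj N))
    (α₁₃ : ∀ {M N : C}, (a1star.obj M ⟶ a2star.obj N) → (b1star.obj M ⟶ b3star.obj N))
    (α₂₃ : ∀ {M N : C}, (a1star.obj M ⟶ a2star.obj N) → (b2star.obj M ⟶ b3star.obj N))
    (ρ : ∀ {M N : C}, ((T : C ⥤ C).obj ((T : C ⥤ C).obj M) ⟶ N) →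
        (b1star.obj M ⟶ b3star.obj N))
    (hρ : ∀ M N : C, Function.Injective (ρ (M := M) (N := N)))
    (hcomp : ∀ {M N P : C} (φ₁₂ : (T : C ⥤ C).obj M ⟶ N) (φ₂₃ : (T : C ⥤ C).obj N ⟶ P),
      ρ ((T : C ⥤ C).map φ₁₂ ≫ φ₂₃) = α₁₂ (ξ φ₁₂) ≫ α₂₃ (ξ φ₂₃))
    (hmul : ∀ {M N : C} (φ : (T : C ⥤ C).obj M ⟶ N),
      ρ (T.μ.app M ≫ φ) = α₁₃ (ξ φ))
    (M : C) (φ : (T : C ⥤ C).obj M ⟶ M) :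
    (T : C ⥤ C).map φ ≫ φ = T.μ.app M ≫ φ ↔
      α₁₃ (ξ φ) = α₁₂ (ξ φ) ≫ α₂₃ (ξ φ) := by
  rw [← (hρ M M).eq_iff, hcomp, hmul, eq_comm]

/-- Abstract form of Proposition 1 / Corollary 1 of the paper: given a monad `T` on `C`,
functors `a₁^*, a₂^*, Δ^*` with `Δ^* a₁^* = Δ^* a₂^* = Id`, a family
`ξ : Hom(T M, N) → Hom(a₁^* M, a₂^* N)`, functors `b₁^*, b₂^*, b₃^*` and maps `α₁₂, α₁₃, α₂₃`
to hom-sets in `C₃`, and an injective map `ρ : Hom(T T M, N) → Hom(b₁^* M, b₃^* N)` satisfying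
(i) `ρ(φ₂₃ ∘ T φ₁₂) = α₂₃(ξ φ₂₃) ∘ α₁₂(ξ φ₁₂)` and (ii) `ρ(φ ∘ μ_M) = α₁₃(ξ φ)`, then for
`φ : T M ⟶ M`, associativity `φ ∘ T φ = φ ∘ μ_M` holds iff the pre-descent cocycle condition
`α₁₃(ξ φ) = α₂₃(ξ φ) ∘ α₁₂(ξ φ)` holds. -/
theorem associativity_iff_predescent
    {C C₂ C₃ : Type*} [Category C] [Category C₂] [Category C₃]
    (T : Monad C)
    (a1star a2star : C ⥤ C₂) (Δstar : C₂ ⥤ C)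
    (hΔ1 : a1star ⋙ Δstar = 𝟭 C) (hΔ2 : a2star ⋙ Δstar = 𝟭 C)
    (b1star b2star b3star : C ⥤ C₃)
    (ξ : ∀ {M N : C}, ((T : C ⥤ C).obj M ⟶ N) → (a1star.obj M ⟶ a2star.obj N))
    (α₁₂ : ∀ {M N : C}, (a1star.obj M ⟶ a2star.obj N) → (b1star.obj M ⟶ b2star.obj N))
    (α₁₃ : ∀ {M N : C}, (a1star.obj M ⟶ a2star.obj N) → (b1star.obj M ⟶ b3star.obj N))
    (α₂₃ : ∀ {M N : C}, (a1star.obj M ⟶ a2star.obj N) → (b2star.obj M ⟶ b3star.obj N))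
    (ρ : ∀ {M N : C}, ((T : C ⥤ C).obj ((T : C ⥤ C).obj M) ⟶ N) →
        (b1star.obj M ⟶ b3star.obj N))
    (hρ : ∀ M N : C, Function.Injective (ρ (M := M) (N := N)))
    (hcomp : ∀ {M N P : C} (φ₁₂ : (T : C ⥤ C).obj M ⟶ N) (φ₂₃ : (T : C ⥤ C).obj N ⟶ P),
      ρ ((T : C ⥤ C).map φ₁₂ ≫ φ₂₃) = α₁₂ (ξ φ₁₂) ≫ α₂₃ (ξ φ₂₃))
    (hmul : ∀ {M N : C} (φ : (T : C ⥤ C).obj M ⟶ N),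
      ρ (T.μ.app M ≫ φ) = α₁₃ (ξ φ))
    (M : C) (φ : (T : C ⥤ C).obj M ⟶ M) :
    (T : C ⥤ C).map φ ≫ φ = T.μ.app M ≫ φ ↔
      α₁₃ (ξ φ) = α₁₂ (ξ φ) ≫ α₂₃ (ξ φ) :=
  associativity_iff_predescent_general T a1star a2star b1star b2star b3star ξ α₁₂ α₁₃ α₂₃ ρ hρ hcomp
    hmul M φ
end

section
/- Let M and v be as follows: a₁^*, a₂^* : C₁ → C₂ functors, v : a₁^* M ⟶ a₂^* M a morphism in C₂, p₁^*, p₂^*, p₃^* : C₂ → C₃ functors satisfying p₂^* a₁^* = p₃^* a₁^* =: b₁^*, p₁^* a₁^* = p₃^* a₂^* =: b₂^*, p₁^* a₂^* = p₂^* a₂^* =: b₃^* (face identities), and suppose v satisfies the pre-descent (cocycle) condition p₂^*(v) = p₁^*(v) ∘ p₃^*(v). Suppose further there is a functor s₁^* : C₃ → C₂ with s₁^* ∘ p₁^* = a₂^* ∘ Δ^* (so that s₁^*(p₁^* v) = a₂^*(Δ^* v)) and s₁^* p₂^* = s₁^* p₃^* = Id_{C₂}, and a functor Δ^* : C₂ →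 C₁ with Δ^* a₁^* = Δ^* a₂^* = Id. If v is invertible (or merely right cancellable), then Δ^*(v) = 1_M. -/
open CategoryTheory

/-- Proposition 4.1 a) in functorial form: with functors `a₁^*, a₂^* : C₁ ⥤ C₂`,
`p₁^*, p₂^*, p₃^* : C₂ ⥤ C₃` satisfying the face identities, a diagonal
`Δ^* : C₂ ⥤ C₁` with `Δ^* a₁^* = Δ^* a₂^* = Id`, and a partial diagonal
`s₁^* : C₃ ⥤ C₂` with `s₁^* p₁^* = a₂^* Δ^*`, `s₁^* p₂^* = s₁^* p₃^* = Id`,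
if `v : a₁^* M ⟶ a₂^* M` satisfies the pre-descent (cocycle) condition and is
invertible—or merely right cancellable, i.e. epi—then `Δ^* v = 1_M`. -/
theorem predescent_epi_implies_unit_condition
    {C₁ C₂ C₃ : Type*} [Category C₁] [Category C₂] [Category C₃]
    (a1star a2star : C₁ ⥤ C₂) (p1star p2star p3star : C₂ ⥤ C₃)
    (hf1 : a1star ⋙ p2star = a1star ⋙ p3star)
    (hf2 : a1star ⋙ p1star = a2star ⋙ p3star)
    (hf3 : a2star ⋙ p1star = a2star ⋙ p2star)
    (Δstar : C₂ ⥤ C₁)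
    (hΔ1 : a1star ⋙ Δstar = 𝟭 C₁) (hΔ2 : a2star ⋙ Δstar = 𝟭 C₁)
    (s1star : C₃ ⥤ C₂)
    (hs1 : p1star ⋙ s1star = Δstar ⋙ a2star)
    (hs2 : p2star ⋙ s1star = 𝟭 C₂) (hs3 : p3star ⋙ s1star = 𝟭 C₂)
    (M : C₁) (v : a1star.obj M ⟶ a2star.obj M)
    (hv : p2star.map v =
      eqToHom (Functor.congr_obj hf1 M) ≫ p3star.map v ≫
        eqToHom (Functor.congr_obj hf2 M).symm ≫ p1star.map v ≫
        eqToHom (Functor.congr_obj hf3 M))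
    (hepi : Epi v) :
    Δstar.map v =
      eqToHom ((Functor.congr_obj hΔ1 M).trans (Functor.congr_obj hΔ2 M).symm) := by

  have key := congrArg s1star.map hv
  simp only [Functor.map_comp, eqToHom_map] at key
  rw [← Functor.comp_map, ← Functor.comp_map, ← Functor.comp_map,
      Functor.congr_hom hs2 v, Functor.congr_hom hs3 v, Functor.congr_hom hs1 v] at key
  simp only [Functor.id_map, Functor.comp_map, eqToHom_trans_assoc, Category.assoc] at key
  simp only [eqToHom_comp_iff, eqToHom_trans_assoc, eqToHom_refl, Category.id_comp] at key
  rw [cancel_epi v] at key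
  have key2 := congrArg Δstar.map key
  simp only [Functor.map_comp, eqToHom_map] at key2
  rw [← Functor.comp_map a2star Δstar, Functor.congr_hom hΔ2 (Δstar.map v)] at key2
  simp only [Functor.id_map, eqToHom_trans, eqToHom_trans_assoc, Category.assoc,
    eqToHom_comp_iff, comp_eqToHom_iff] at key2
  have key3 := key2.symm
  rw [eqToHom_comp_iff, comp_eqToHom_iff] at key3
  simp only [key3, Category.assoc, eqToHom_trans]
end
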